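/- Let R be a commutative ring and let a, b : ℤ → R satisfy a(n) = b(n) = 0 for all n < 0, a(0) = b(0) = 1, and Σ_{i+j=n, i,j ≥ 0} a(i)·b(j) = 0 for every n ≥ 1 (i.e. the power series Σ a(n)t^n and Σ b(n)t^n are mutually inverse). Let d, ℓ be natural numbers and let λ be a partition in the d × ℓ box (a weakly decreasing function {1,…,d} → ℕ with values at most ℓ), with transpose λᵗ in the ℓ × d box given by λᵗ_i := #{ j : λ_j ≥ i }, and with size |λ| = Σ_i λ_i. Then det( a(λ_i + j − i) )_{1 ≤ i,j ≤ d} = (−1)^{|λ|} · det( b(λᵗ_i + j − i) )_{1 ≤ i,j ≤ ℓ}. -/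

import Mathlib

/-!
Both determinants are complementary minors of the mutually inverse unitriangular Toeplitz
matrices `T(a) = (a (q - p))` and `T(b) = (b (q - p))` of size `d + ℓ`. Reorder the rows of
`T(a)` by the positions `ℓ - λᵢ + i` of the down steps and `ℓ - 1 - j + λᵗⱼ` of the left steps of
the boundary path of `λ`, and its columns by the same positions for the empty partition. Then
the leading `d × d` block of the reordered `T(a)` is `(a (λᵢ + j - i))`, the trailing `ℓ × ℓ`
block of the correspondingly reordered `T(b)` is the transpose of `(b (λᵗᵢ + j - i))`, and
Jacobi's complementary minor formula relates the two. The reordering permutation has one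
inversion for each cell of `λ`, which gives the sign `(-1) ^ |λ|`.
-/

open Finset Equiv

theorem Equiv.Perm.sign_symm_trans_eq_neg_one_pow_card {α : Type*} [Fintype α] [DecidableEq α]
    {n : ℕ} (e f : α ≃ Fin n) :
    Perm.sign (e.symm.trans f) = (-1) ^ #{p : α × α | e p.1 < e p.2 ∧ f p.2 < f p.1} := by
  rw [Perm.sign_eq_prod_prod_Iio, ← prod_const, prod_filter, Fintype.prod_prod_type, prod_comm,
    ← e.prod_comp]
  refine prod_congr rfl fun y _ => ?_
  rw [← filter_gt_eq_Iio, prod_filter, ← e.prod_comp]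
  refine prod_congr rfl fun x _ => ?_
  simp only [Equiv.trans_apply, Equiv.symm_apply_apply]
  by_cases hexy : e x < e y
  · have hfxy : f x ≠ f y := f.injective.ne (e.injective.ne_iff.mp hexy.ne)
    rcases hfxy.lt_or_gt with h | h <;> simp [hexy, h, h.not_gt]
  · simp [hexy]

theorem sum_fin_mul_eq_sum_antidiagonal {R : Type*} [Semiring R] {N p q : ℕ} (hpq : p ≤ q)
    (hq : q < N) {a b : ℤ → R} (ha : ∀ n < 0, a n = 0) (hb : ∀ n < 0, b n = 0) :
    ∑ t : Fin N, a ((t : ℕ) - (p : ℤ)) * b ((q : ℤ) - (t : ℕ)) =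
      ∑ x ∈ antidiagonal (q - p), a x.1 * b x.2 := by
  have hsub : Ico p (q + 1) ⊆ range N := fun t ht => by
    rw [mem_Ico] at ht
    exact mem_range.mpr (by omega)
  have hvanish : ∀ t ∈ range N, t ∉ Ico p (q + 1) → a (t - (p : ℤ)) * b ((q : ℤ) - t) = 0 := by
    intro t _ ht
    rw [mem_Ico, not_and, not_lt] at ht
    rcases lt_or_ge t p with htp | hpt
    · rw [ha _ (by omega), zero_mul]
    · rw [hb _ (by have := ht hpt; omega), mul_zero]
  rw [Fin.sum_univ_eq_sum_range (fun t : ℕ => a (t - (p : ℤ)) * b ((q : ℤ) - t)),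
    ← sum_subset hsub hvanish, sum_Ico_eq_sum_range,
    Nat.sum_antidiagonal_eq_sum_range_succ_mk, show q + 1 - p = q - p + 1 by omega]
  refine sum_congr rfl fun k hk => ?_
  rw [mem_range] at hk
  push_cast [show k ≤ q - p by omega, hpq]
  ring_nf

namespace Matrix

variable {m n α R : Type*} [Fintype m] [Fintype n] [DecidableEq m] [DecidableEq n]

def toeplitz (N : ℕ) (a : ℤ → R) : Matrix (Fin N) (Fin N) R :=
  of fun p q => a ((q : ℕ) - (p : ℕ))

section CommRing

variable [CommRing R]

theorem det_submatrix_equiv_equiv [Fintype α] [DecidableEq α] (e f : α ≃ m)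
    (A : Matrix m m R) : (A.submatrix e f).det = Perm.sign (e.symm.trans f) * A.det := by
  have : A.submatrix e f = (A.submatrix id (e.symm.trans f)).submatrix e e := by
    ext; simp
  rw [this, det_submatrix_equiv_self, det_permute']

theorem det_toBlocks₁₁_eq_det_mul_det_toBlocks₂₂_of_mul_eq_one
    {M N : Matrix (m ⊕ n) (m ⊕ n) R} (h : M * N = 1) :
    M.toBlocks₁₁.det = M.det * N.toBlocks₂₂.det := by
  rw [← fromBlocks_toBlocks M, ← fromBlocks_toBlocks N, fromBlocks_multiply, ← fromBlocks_one,
    fromBlocks_inj] at h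
  -- `M * [[1, N₁₂], [0, N₂₂]] = [[M₁₁, 0], [M₂₁, 1]]`, by the second block column of `M * N = 1`
  have key : M * fromBlocks 1 N.toBlocks₁₂ 0 N.toBlocks₂₂ =
      fromBlocks M.toBlocks₁₁ 0 M.toBlocks₂₁ 1 := by
    rw [← fromBlocks_toBlocks M, fromBlocks_multiply]
    simp [h.2.1, h.2.2.2]
  simpa [det_fromBlocks_zero₂₁, det_fromBlocks_zero₁₂] using (congrArg det key).symm

theorem det_toeplitz {N : ℕ} {a : ℤ → R} (ha : ∀ n < 0, a n = 0) (ha0 : a 0 = 1) :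
    (toeplitz N a).det = 1 := by
  refine (det_of_isUpperTriangular fun p q (hqp : q < p) => ha _ ?_).trans ?_
  · simpa using hqp
  · simp [ha0]

end CommRing

variable [Semiring R]

theorem toeplitz_mul_toeplitz_eq_one {N : ℕ} {a b : ℤ → R}
    (ha : ∀ n < 0, a n = 0) (hb : ∀ n < 0, b n = 0)
    (hab : ∀ n : ℕ, ∑ x ∈ antidiagonal n, a x.1 * b x.2 = if n = 0 then 1 else 0) :
    toeplitz N a * toeplitz N b = 1 := by
  ext p q
  rw [mul_apply, one_apply]
  simp only [toeplitz, of_apply]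
  rcases lt_or_ge (q : ℕ) p with hqp | hpq
  · rw [if_neg (Fin.ne_of_gt hqp)]
    refine sum_eq_zero fun t _ => ?_
    rcases lt_or_ge (t : ℕ) p with htp | hpt
    · rw [ha _ (by omega), zero_mul]
    · rw [hb _ (by omega), mul_zero]
  · rw [sum_fin_mul_eq_sum_antidiagonal hpq q.isLt ha hb, hab]
    rcases eq_or_ne p q with rfl | hne
    · simp
    · simp only [hne, if_false]
      rw [if_neg (by omega)]

end Matrix

namespace BoxPartition

variable {d ℓ : ℕ} {lam : Fin d → ℕ}

def conj (lam : Fin d → ℕ) (j : ℕ) : ℕ :=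
  #{t | j + 1 ≤ lam t}

@[simp] theorem conj_zero (j : ℕ) : conj (0 : Fin d → ℕ) j = 0 := by
  simp [conj]

theorem conj_le (lam : Fin d → ℕ) (j : ℕ) : conj lam j ≤ d :=
  (card_filter_le _ _).trans_eq (card_fin d)

theorem conj_antitone (lam : Fin d → ℕ) : Antitone (conj lam) :=
  fun _ _ hjk => card_le_card <| monotone_filter_right _ fun _ _ => by omega

theorem lt_conj_iff (hlam : Antitone lam) (i : Fin d) (j : ℕ) :
    (i : ℕ) < conj lam j ↔ j < lam i := by
  constructor
  · intro h
    by_contra! hij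
    have hsub : ({t | j + 1 ≤ lam t} : Finset (Fin d)) ⊆ Iio i := fun t ht => by
      rw [mem_filter] at ht
      exact mem_Iio.mpr (lt_of_not_ge fun hit => by have := hlam hit; omega)
    exact h.not_ge ((card_le_card hsub).trans_eq (Fin.card_Iio i))
  · intro h
    have hsub : Iic i ⊆ ({t | j + 1 ≤ lam t} : Finset (Fin d)) := fun t ht => by
      have := hlam (mem_Iic.mp ht)
      rw [mem_filter]
      exact ⟨mem_univ t, by omega⟩
    exact (Fin.card_Iic i).symm.trans_le (card_le_card hsub)

/-- Walking along the boundary of the diagram of `lam` from the top-right to the bottom-left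
corner of the `d × ℓ` box, the down step along row `i` and the left step along column `j` are
the steps number `boundaryIndex ℓ lam (.inl i)` and `boundaryIndex ℓ lam (.inr j)`, counting
from `0`. -/
def boundaryIndex (ℓ : ℕ) (lam : Fin d → ℕ) : Fin d ⊕ Fin ℓ → ℕ :=
  Sum.elim (fun i => ℓ - lam i + i) (fun j => ℓ - 1 - j + conj lam j)

@[simp] theorem boundaryIndex_inl (i : Fin d) :
    boundaryIndex ℓ lam (.inl i) = ℓ - lam i + i := rfl

@[simp] theorem boundaryIndex_inr (j : Fin ℓ) :
    boundaryIndex ℓ lam (.inr j) = ℓ - 1 - j + conj lam j := rfl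

theorem boundaryIndex_lt (hle : ∀ i, lam i ≤ ℓ) (x : Fin d ⊕ Fin ℓ) :
    boundaryIndex ℓ lam x < d + ℓ := by
  rcases x with i | j
  · have := hle i; simp only [boundaryIndex_inl]; omega
  · have := conj_le lam j; simp only [boundaryIndex_inr]; omega

theorem boundaryIndex_inl_lt_inl_iff (hlam : Antitone lam) (i i' : Fin d) :
    boundaryIndex ℓ lam (.inl i) < boundaryIndex ℓ lam (.inl i') ↔ i < i' := by
  refine StrictMono.lt_iff_lt (f := fun i => boundaryIndex ℓ lam (.inl i)) fun i i' h => ?_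
  have := hlam h.le
  simp only [boundaryIndex_inl]
  omega

theorem boundaryIndex_inr_lt_inr_iff (j j' : Fin ℓ) :
    boundaryIndex ℓ lam (.inr j) < boundaryIndex ℓ lam (.inr j') ↔ j' < j := by
  refine StrictAnti.lt_iff_gt (f := fun j => boundaryIndex ℓ lam (.inr j)) fun j j' h => ?_
  have := conj_antitone lam h.le
  have := j'.isLt
  simp only [boundaryIndex_inr]
  omega

theorem boundaryIndex_inl_lt_inr_iff (hlam : Antitone lam) (i : Fin d) (j : Fin ℓ) :
    boundaryIndex ℓ lam (.inl i) < boundaryIndex ℓ lam (.inr j) ↔ (j : ℕ) < lam i := by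
  have := (lt_conj_iff hlam i j).not
  have := j.isLt
  simp only [boundaryIndex_inl, boundaryIndex_inr]
  omega

theorem boundaryIndex_inr_lt_inl_iff (hlam : Antitone lam) (i : Fin d) (j : Fin ℓ) :
    boundaryIndex ℓ lam (.inr j) < boundaryIndex ℓ lam (.inl i) ↔ lam i ≤ j := by
  have := (lt_conj_iff hlam i j).not
  have := j.isLt
  simp only [boundaryIndex_inl, boundaryIndex_inr]
  omega

theorem boundaryIndex_injective (hlam : Antitone lam) :
    Function.Injective (boundaryIndex ℓ lam) := by
  rintro (i | j) (i' | j') h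
  · have := boundaryIndex_inl_lt_inl_iff (ℓ := ℓ) hlam i i'
    have := boundaryIndex_inl_lt_inl_iff (ℓ := ℓ) hlam i' i
    rw [Sum.inl.injEq]
    omega
  · have := boundaryIndex_inl_lt_inr_iff hlam i j'
    have := boundaryIndex_inr_lt_inl_iff hlam i j'
    omega
  · have := boundaryIndex_inl_lt_inr_iff hlam i' j
    have := boundaryIndex_inr_lt_inl_iff hlam i' j
    omega
  · have := boundaryIndex_inr_lt_inr_iff (lam := lam) j j'
    have := boundaryIndex_inr_lt_inr_iff (lam := lam) j' j
    rw [Sum.inr.injEq]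
    omega

/-- The only inversions are the pairs `(.inl i, .inr j)` with `(i, j)` a cell of `lam`. -/
theorem card_inversions_boundaryIndex (hlam : Antitone lam) (hle : ∀ i, lam i ≤ ℓ) :
    #{p : (Fin d ⊕ Fin ℓ) × (Fin d ⊕ Fin ℓ) | boundaryIndex ℓ lam p.1 < boundaryIndex ℓ lam p.2 ∧
      boundaryIndex ℓ 0 p.2 < boundaryIndex ℓ 0 p.1} = ∑ i, lam i := by
  have h0 : Antitone (0 : Fin d → ℕ) := antitone_const
  have asymm : ∀ {n} (a b : Fin n), ¬(a < b ∧ b < a) := fun _ _ h => lt_asymm h.1 h.2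
  rw [card_filter, Fintype.sum_prod_type]
  simp only [Fintype.sum_sum_type, boundaryIndex_inl_lt_inl_iff hlam,
    boundaryIndex_inl_lt_inl_iff h0, boundaryIndex_inr_lt_inr_iff,
    boundaryIndex_inl_lt_inr_iff hlam, boundaryIndex_inl_lt_inr_iff h0,
    boundaryIndex_inr_lt_inl_iff h0]
  simp [asymm, Fin.card_filter_val_lt, hle]

noncomputable def boundaryEquiv (lam : Fin d → ℕ) (hlam : Antitone lam) (hle : ∀ i, lam i ≤ ℓ) :
    Fin d ⊕ Fin ℓ ≃ Fin (d + ℓ) :=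
  Equiv.ofBijective (fun x => ⟨boundaryIndex ℓ lam x, boundaryIndex_lt hle x⟩) <|
    (Fintype.bijective_iff_injective_and_card _).mpr
      ⟨fun _ _ h => boundaryIndex_injective hlam (Fin.val_eq_of_eq h), by simp⟩

@[simp] theorem boundaryEquiv_val (hlam : Antitone lam) (hle : ∀ i, lam i ≤ ℓ)
    (x : Fin d ⊕ Fin ℓ) : (boundaryEquiv lam hlam hle x : ℕ) = boundaryIndex ℓ lam x := rfl

theorem sign_boundaryEquiv (hlam : Antitone lam) (hle : ∀ i, lam i ≤ ℓ) :
    Perm.sign ((boundaryEquiv lam hlam hle).symm.trans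
      (boundaryEquiv 0 antitone_const fun _ => Nat.zero_le ℓ)) = (-1) ^ ∑ i, lam i := by
  rw [Perm.sign_symm_trans_eq_neg_one_pow_card]
  simp only [Fin.lt_def, boundaryEquiv_val]
  rw [card_inversions_boundaryIndex hlam hle]

variable {R : Type*}

open Matrix

theorem toBlocks₁₁_toeplitz_submatrix_boundaryEquiv (hlam : Antitone lam) (hle : ∀ i, lam i ≤ ℓ)
    (a : ℤ → R) :
    ((toeplitz (d + ℓ) a).submatrix (boundaryEquiv lam hlam hle)
        (boundaryEquiv 0 antitone_const fun _ => Nat.zero_le ℓ)).toBlocks₁₁ =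
      of fun i j : Fin d => a ((lam i : ℤ) + ((j : ℕ) : ℤ) - ((i : ℕ) : ℤ)) := by
  ext i j
  simp only [toBlocks₁₁, toeplitz, submatrix_apply, of_apply, boundaryEquiv_val,
    boundaryIndex_inl, Pi.zero_apply, tsub_zero, Nat.cast_add]
  congr 1
  have := hle i
  omega

theorem toBlocks₂₂_toeplitz_submatrix_boundaryEquiv (hlam : Antitone lam) (hle : ∀ i, lam i ≤ ℓ)
    (b : ℤ → R) :
    ((toeplitz (d + ℓ) b).submatrix (boundaryEquiv 0 antitone_const fun _ => Nat.zero_le ℓ)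
        (boundaryEquiv lam hlam hle)).toBlocks₂₂ =
      (of fun i j : Fin ℓ => b ((conj lam i : ℤ) + ((j : ℕ) : ℤ) - ((i : ℕ) : ℤ)))ᵀ := by
  ext i j
  simp only [toBlocks₂₂, toeplitz, submatrix_apply, of_apply, boundaryEquiv_val,
    boundaryIndex_inr, Nat.cast_add, conj_zero, add_zero, transpose_apply]
  congr 1
  omega

end BoxPartition

open Matrix BoxPartition

/-- Duality for minors of mutually inverse power series: for a partition `λ` in the
`d × ℓ` box with transpose `λᵗ` (`λᵗ_i = #{j : λ_j ≥ i}`),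
`det(a(λ_i + j - i))_{d×d} = (-1)^{|λ|} · det(b(λᵗ_i + j - i))_{ℓ×ℓ}`. -/
theorem stmt_10 {R : Type*} [CommRing R] (a b : ℤ → R)
    (ha : ∀ n : ℤ, n < 0 → a n = 0) (hb : ∀ n : ℤ, n < 0 → b n = 0)
    (ha0 : a 0 = 1) (hb0 : b 0 = 1)
    (hab : ∀ n : ℕ, 1 ≤ n →
      (∑ p ∈ Finset.HasAntidiagonal.antidiagonal n, a (p.1 : ℤ) * b (p.2 : ℤ)) = 0)
    (d ℓ : ℕ) (lam : Fin d → ℕ) (hlam : Antitone lam) (hle : ∀ i, lam i ≤ ℓ) :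
    (Matrix.of fun i j : Fin d =>
        a ((lam i : ℤ) + ((j : ℕ) : ℤ) - ((i : ℕ) : ℤ))).det =
      (-1 : R) ^ (∑ i, lam i) *
        (Matrix.of fun i j : Fin ℓ =>
          b (((Finset.univ.filter fun t : Fin d => (i : ℕ) + 1 ≤ lam t).card : ℤ) +
            ((j : ℕ) : ℤ) - ((i : ℕ) : ℤ))).det := by
  have hconv : ∀ n : ℕ, ∑ x ∈ antidiagonal n, a x.1 * b x.2 = if n = 0 then 1 else 0 := by
    rintro (_ | n)
    · simp [ha0, hb0]
    · exact hab _ n.succ_pos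
  set ρ := boundaryEquiv lam hlam hle
  set σ := boundaryEquiv 0 antitone_const fun _ => Nat.zero_le ℓ
  have hinv : (toeplitz (d + ℓ) a).submatrix ρ σ * (toeplitz (d + ℓ) b).submatrix σ ρ = 1 := by
    rw [submatrix_mul_equiv, toeplitz_mul_toeplitz_eq_one ha hb hconv, submatrix_one_equiv]
  have hdet : ((toeplitz (d + ℓ) a).submatrix ρ σ).det = (-1) ^ ∑ i, lam i := by
    rw [det_submatrix_equiv_equiv, det_toeplitz ha ha0, mul_one, sign_boundaryEquiv hlam hle]
    norm_num
  rw [← toBlocks₁₁_toeplitz_submatrix_boundaryEquiv hlam hle,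
    det_toBlocks₁₁_eq_det_mul_det_toBlocks₂₂_of_mul_eq_one hinv, hdet,
    toBlocks₂₂_toeplitz_submatrix_boundaryEquiv hlam hle, det_transpose]
  rfl
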